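/- For every nonnegative integer m, there exists a bijection between the set of alternating permutations of [2m] with exactly m fixed points and the set of derangements of [m]. -/

import Mathlib

/-- `π` is an alternating permutation: `π 1 > π 2 < π 3 > π 4 < ⋯`
(here stated with 0-indexed positions). -/
def IsAlternating {n : ℕ} (π : Equiv.Perm (Fin n)) : Prop :=
  ∀ i : ℕ, ∀ h : i + 1 < n,
    if i % 2 = 0 then π ⟨i + 1, h⟩ < π ⟨i, Nat.lt_of_succ_lt h⟩
    else π ⟨i, Nat.lt_of_succ_lt h⟩ < π ⟨i + 1, h⟩

/-- `π` is a reverse alternating permutation: `π 1 < π 2 > π 3 < π 4 > ⋯`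
(here stated with 0-indexed positions). -/
def IsRevAlternating {n : ℕ} (π : Equiv.Perm (Fin n)) : Prop :=
  ∀ i : ℕ, ∀ h : i + 1 < n,
    if i % 2 = 0 then π ⟨i, Nat.lt_of_succ_lt h⟩ < π ⟨i + 1, h⟩
    else π ⟨i + 1, h⟩ < π ⟨i, Nat.lt_of_succ_lt h⟩

/-- The number of fixed points of a permutation of `Fin n`. -/
def fixedPointCount {n : ℕ} (π : Equiv.Perm (Fin n)) : ℕ :=
  (Finset.univ.filter fun i => π i = i).card

namespace AltDer

variable {m : ℕ}

def pIdx (x : Fin (2 * m)) : Fin m := ⟨x.val / 2, by have := x.2; omega⟩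

def sfun (σ : Equiv.Perm (Fin m)) (j : Fin m) : Fin (2 * m) :=
  ⟨2 * j.val + (if j < σ j then 0 else 1), by have := j.2; split <;> omega⟩

lemma pIdx_sfun (σ : Equiv.Perm (Fin m)) (j : Fin m) : pIdx (sfun σ j) = j := by
  apply Fin.ext
  simp only [pIdx, sfun]
  split <;> omega

lemma sfun_injective (σ : Equiv.Perm (Fin m)) : Function.Injective (sfun σ) := by
  intro a b h
  have := congrArg pIdx h
  rwa [pIdx_sfun, pIdx_sfun] at this

def phiFun (σ : Equiv.Perm (Fin m)) (x : Fin (2 * m)) : Fin (2 * m) :=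
  if x = sfun σ (pIdx x) then sfun σ (σ (pIdx x)) else x

def phiInv (σ : Equiv.Perm (Fin m)) (x : Fin (2 * m)) : Fin (2 * m) :=
  if x = sfun σ (pIdx x) then sfun σ (σ⁻¹ (pIdx x)) else x

lemma phiFun_sfun (σ : Equiv.Perm (Fin m)) (j : Fin m) :
    phiFun σ (sfun σ j) = sfun σ (σ j) := by
  simp [phiFun, pIdx_sfun]

lemma phiInv_sfun (σ : Equiv.Perm (Fin m)) (j : Fin m) :
    phiInv σ (sfun σ j) = sfun σ (σ⁻¹ j) := by
  simp [phiInv, pIdx_sfun]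

lemma phiFun_of_ne (σ : Equiv.Perm (Fin m)) {x : Fin (2 * m)}
    (h : x ≠ sfun σ (pIdx x)) : phiFun σ x = x := by
  simp [phiFun, h]

lemma phiInv_of_ne (σ : Equiv.Perm (Fin m)) {x : Fin (2 * m)}
    (h : x ≠ sfun σ (pIdx x)) : phiInv σ x = x := by
  simp [phiInv, h]

def phi (σ : Equiv.Perm (Fin m)) : Equiv.Perm (Fin (2 * m)) where
  toFun := phiFun σ
  invFun := phiInv σ
  left_inv := by
    intro x
    by_cases h : x = sfun σ (pIdx x)
    · rw [h, phiFun_sfun, phiInv_sfun, Equiv.Perm.inv_def, Equiv.symm_apply_apply]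
    · rw [phiFun_of_ne σ h, phiInv_of_ne σ h]
  right_inv := by
    intro x
    by_cases h : x = sfun σ (pIdx x)
    · rw [h, phiInv_sfun, phiFun_sfun, Equiv.Perm.inv_def, Equiv.apply_symm_apply]
    · rw [phiInv_of_ne σ h, phiFun_of_ne σ h]

lemma phi_apply (σ : Equiv.Perm (Fin m)) (x : Fin (2 * m)) : phi σ x = phiFun σ x := rfl


lemma sfun_val (σ : Equiv.Perm (Fin m)) (j : Fin m) :
    (sfun σ j).val = 2 * j.val + (if j < σ j then 0 else 1) := rfl

lemma lo_eq_sfun (σ : Equiv.Perm (Fin m)) (j : Fin m) (hlt : j < σ j)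
    (h2 : 2 * j.val < 2 * m) : (⟨2 * j.val, h2⟩ : Fin (2 * m)) = sfun σ j := by
  apply Fin.ext; simp [sfun_val, hlt]

lemma hi_eq_sfun (σ : Equiv.Perm (Fin m)) (j : Fin m) (hlt : ¬ j < σ j)
    (h2 : 2 * j.val + 1 < 2 * m) : (⟨2 * j.val + 1, h2⟩ : Fin (2 * m)) = sfun σ j := by
  apply Fin.ext; simp [sfun_val, hlt]

lemma pIdx_lo (j : Fin m) (h2 : 2 * j.val < 2 * m) :
    pIdx (⟨2 * j.val, h2⟩ : Fin (2 * m)) = j := by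
  apply Fin.ext; simp only [pIdx]; omega

lemma pIdx_hi (j : Fin m) (h2 : 2 * j.val + 1 < 2 * m) :
    pIdx (⟨2 * j.val + 1, h2⟩ : Fin (2 * m)) = j := by
  apply Fin.ext; simp only [pIdx]; omega

/-- Value of `phi σ` at the even position `2j`. -/
lemma phi_lo (σ : Equiv.Perm (Fin m)) (j : Fin m) (h2 : 2 * j.val < 2 * m) :
    phi σ ⟨2 * j.val, h2⟩ =
      if j < σ j then sfun σ (σ j) else ⟨2 * j.val, h2⟩ := by
  by_cases hlt : j < σ j
  · rw [if_pos hlt, phi_apply, lo_eq_sfun σ j hlt h2, phiFun_sfun]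
  · rw [if_neg hlt, phi_apply, phiFun_of_ne]
    rw [pIdx_lo]
    intro hx
    have := congrArg Fin.val hx
    simp [sfun_val, hlt] at this


lemma phi_hi (σ : Equiv.Perm (Fin m)) (j : Fin m) (h2 : 2 * j.val + 1 < 2 * m) :
    phi σ ⟨2 * j.val + 1, h2⟩ =
      if j < σ j then ⟨2 * j.val + 1, h2⟩ else sfun σ (σ j) := by
  by_cases hlt : j < σ j
  · rw [if_pos hlt, phi_apply, phiFun_of_ne]
    rw [pIdx_hi]
    intro hx
    have := congrArg Fin.val hx
    simp [sfun_val, hlt] at this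
  · rw [if_neg hlt, phi_apply, hi_eq_sfun σ j hlt h2, phiFun_sfun]

lemma sfun_val_bounds (σ : Equiv.Perm (Fin m)) (j : Fin m) :
    2 * j.val ≤ (sfun σ j).val ∧ (sfun σ j).val ≤ 2 * j.val + 1 := by
  rw [sfun_val]; split <;> omega

lemma phi_alternating (σ : Equiv.Perm (Fin m)) (hσ : ∀ x, σ x ≠ x) :
    IsAlternating (phi σ) := by
  intro i h
  -- bounds for even and odd positions
  have key : ∀ j : Fin m, ∀ h2 : 2 * j.val + 1 < 2 * m,
      ((phi σ ⟨2 * j.val + 1, h2⟩ : Fin (2 * m)) : ℕ) < (phi σ ⟨2 * j.val, Nat.lt_of_succ_lt h2⟩ : Fin (2*m)).val ∧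
      (phi σ ⟨2 * j.val + 1, h2⟩ : Fin (2 * m)).val ≤ 2 * j.val + 1 ∧
      2 * j.val ≤ (phi σ ⟨2 * j.val, Nat.lt_of_succ_lt h2⟩ : Fin (2*m)).val := by
    intro j h2
    rw [phi_lo σ j, phi_hi σ j]
    by_cases hlt : j < σ j
    · have hb := sfun_val_bounds σ (σ j)
      have : j.val < (σ j).val := hlt
      simp only [if_pos hlt]
      omega
    · have hb := sfun_val_bounds σ (σ j)
      have hne : (σ j).val ≠ j.val := fun hc => hσ j (Fin.ext hc)
      have : (σ j).val < j.val := by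
        have : ¬ j.val < (σ j).val := hlt
        omega
      simp only [if_neg hlt]
      omega
  rcases Nat.even_or_odd i with ⟨j, hj⟩ | ⟨j, hj⟩
  · -- i = 2 j even
    have hjm : j < m := by omega
    have hmod : i % 2 = 0 := by omega
    rw [if_pos hmod]
    have h2 : 2 * (⟨j, hjm⟩ : Fin m).val + 1 < 2 * m := by simpa using by omega
    have := (key ⟨j, hjm⟩ h2).1
    have e1 : (⟨i + 1, h⟩ : Fin (2 * m)) = ⟨2 * (⟨j, hjm⟩ : Fin m).val + 1, h2⟩ := by
      apply Fin.ext; simp; omega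
    have e2 : (⟨i, Nat.lt_of_succ_lt h⟩ : Fin (2 * m)) = ⟨2 * (⟨j, hjm⟩ : Fin m).val, Nat.lt_of_succ_lt h2⟩ := by
      apply Fin.ext; simp; omega
    rw [e1, e2]
    exact this
  · -- i = 2 j + 1 odd
    have hjm : j < m := by omega
    have hjm1 : j + 1 < m := by omega
    have hmod : ¬ i % 2 = 0 := by omega
    rw [if_neg hmod]
    have h2 : 2 * (⟨j, hjm⟩ : Fin m).val + 1 < 2 * m := by simp; omega
    have h2' : 2 * (⟨j+1, hjm1⟩ : Fin m).val + 1 < 2 * m := by simp; omega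
    have b1 := (key ⟨j, hjm⟩ h2).2.1
    have b2 := (key ⟨j+1, hjm1⟩ h2').2.2
    have e1 : (⟨i, Nat.lt_of_succ_lt h⟩ : Fin (2 * m)) = ⟨2 * (⟨j, hjm⟩ : Fin m).val + 1, h2⟩ := by
      apply Fin.ext; simp; omega
    have e2 : (⟨i + 1, h⟩ : Fin (2 * m)) = ⟨2 * (⟨j+1, hjm1⟩ : Fin m).val, Nat.lt_of_succ_lt h2'⟩ := by
      apply Fin.ext; simp; omega
    rw [e1, e2]
    show (phi σ _).val < (phi σ _).val
    simp only [Fin.mk.injEq] at b1 b2 ⊢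
    omega


lemma phi_fixed_iff (σ : Equiv.Perm (Fin m)) (hσ : ∀ x, σ x ≠ x) (x : Fin (2 * m)) :
    phi σ x = x ↔ x ≠ sfun σ (pIdx x) := by
  constructor
  · intro hfix hx
    rw [phi_apply] at hfix
    rw [hx, phiFun_sfun] at hfix
    exact hσ (pIdx x) (sfun_injective σ hfix)
  · intro hx
    rw [phi_apply, phiFun_of_ne σ hx]

lemma filter_nonfixed_eq (σ : Equiv.Perm (Fin m)) :
    (Finset.univ.filter fun x => x = sfun σ (pIdx x)) =
      Finset.univ.image (sfun σ) := by
  ext x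
  simp only [Finset.mem_filter, Finset.mem_image, Finset.mem_univ, true_and]
  constructor
  · intro hx; exact ⟨pIdx x, hx.symm⟩
  · rintro ⟨j, rfl⟩; rw [pIdx_sfun]

lemma phi_fixedPointCount (σ : Equiv.Perm (Fin m)) (hσ : ∀ x, σ x ≠ x) :
    fixedPointCount (phi σ) = m := by
  unfold fixedPointCount
  have h1 : (Finset.univ.filter fun x => phi σ x = x) =
      (Finset.univ.filter fun x : Fin (2*m) => ¬ x = sfun σ (pIdx x)) := by
    apply Finset.filter_congr
    intro x _
    exact phi_fixed_iff σ hσ x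
  rw [h1]
  have h2 := Finset.card_filter_add_card_filter_not
    (s := (Finset.univ : Finset (Fin (2*m)))) (p := fun x => x = sfun σ (pIdx x))
  have h3 : (Finset.univ.filter fun x : Fin (2*m) => x = sfun σ (pIdx x)).card = m := by
    rw [filter_nonfixed_eq, Finset.card_image_of_injective _ (sfun_injective σ)]
    simp
  rw [h3] at h2
  simp only [Finset.card_univ, Fintype.card_fin] at h2
  omega


/-! ### The inverse construction -/

def lo (j : Fin m) : Fin (2 * m) := ⟨2 * j.val, by have := j.2; omega⟩
def hi (j : Fin m) : Fin (2 * m) := ⟨2 * j.val + 1, by have := j.2; omega⟩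

lemma lo_val (j : Fin m) : (lo j).val = 2 * j.val := rfl
lemma hi_val (j : Fin m) : (hi j).val = 2 * j.val + 1 := rfl

lemma pIdx_lo' (j : Fin m) : pIdx (lo j) = j := pIdx_lo j _
lemma pIdx_hi' (j : Fin m) : pIdx (hi j) = j := pIdx_hi j _

lemma eq_lo_or_hi (x : Fin (2 * m)) : x = lo (pIdx x) ∨ x = hi (pIdx x) := by
  have hx := x.2
  rcases Nat.even_or_odd x.val with ⟨c, hc⟩ | ⟨c, hc⟩
  · left; apply Fin.ext; simp only [lo_val, pIdx]; omega
  · right; apply Fin.ext; simp only [hi_val, pIdx]; omega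

variable (π : Equiv.Perm (Fin (2 * m)))

lemma alt_pair (hAlt : IsAlternating π) (j : Fin m) : π (hi j) < π (lo j) := by
  have h2 : 2 * j.val + 1 < 2 * m := by have := j.2; omega
  have := hAlt (2 * j.val) h2
  rw [if_pos (by omega)] at this
  exact this

lemma at_most_one (hAlt : IsAlternating π) (j : Fin m) :
    ¬(π (lo j) = lo j ∧ π (hi j) = hi j) := by
  rintro ⟨h1, h2⟩
  have := alt_pair π hAlt j
  rw [h1, h2] at this
  have : (hi j).val < (lo j).val := this
  rw [lo_val, hi_val] at this
  omega

lemma exists_fixed (hAlt : IsAlternating π) (hfpc : fixedPointCount π = m) (j : Fin m) :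
    π (lo j) = lo j ∨ π (hi j) = hi j := by
  classical
  set F := Finset.univ.filter (fun x : Fin (2 * m) => π x = x) with hF
  have hcard : F.card = m := hfpc
  have hinj : Set.InjOn pIdx (F : Set (Fin (2 * m))) := by
    intro x hx y hy hxy
    by_contra hne
    have hxF : π x = x := (Finset.mem_filter.mp hx).2
    have hyF : π y = y := (Finset.mem_filter.mp hy).2
    have hpy : pIdx y = pIdx x := hxy.symm
    rcases eq_lo_or_hi x with h1 | h1 <;> rcases eq_lo_or_hi y with h2 | h2 <;>
      rw [hpy] at h2
    · exact hne (h1.trans h2.symm)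
    · exact at_most_one π hAlt (pIdx x) ⟨h1 ▸ hxF, h2 ▸ hyF⟩
    · exact at_most_one π hAlt (pIdx x) ⟨h2 ▸ hyF, h1 ▸ hxF⟩
    · exact hne (h1.trans h2.symm)
  have himg : F.image pIdx = Finset.univ := by
    apply Finset.eq_univ_of_card
    rw [Finset.card_image_of_injOn hinj, hcard, Fintype.card_fin]
  have hj : j ∈ F.image pIdx := himg ▸ Finset.mem_univ j
  rcases Finset.mem_image.mp hj with ⟨x, hxF, hpx⟩
  have hfix : π x = x := (Finset.mem_filter.mp hxF).2
  rcases eq_lo_or_hi x with h1 | h1 <;> rw [hpx] at h1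
  · exact Or.inl (h1 ▸ hfix)
  · exact Or.inr (h1 ▸ hfix)

def tfun (j : Fin m) : Fin (2 * m) := if π (hi j) = hi j then lo j else hi j

lemma tfun_eq_lo_or_hi (j : Fin m) : tfun π j = lo j ∨ tfun π j = hi j := by
  unfold tfun; split
  · exact Or.inl rfl
  · exact Or.inr rfl

lemma pIdx_tfun (j : Fin m) : pIdx (tfun π j) = j := by
  rcases tfun_eq_lo_or_hi π j with h | h <;> rw [h]
  · exact pIdx_lo' j
  · exact pIdx_hi' j

lemma tfun_val_bounds (j : Fin m) :
    2 * j.val ≤ (tfun π j).val ∧ (tfun π j).val ≤ 2 * j.val + 1 := by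
  rcases tfun_eq_lo_or_hi π j with h | h <;> rw [h] <;> simp [lo_val, hi_val]

lemma tfun_nonfixed (hAlt : IsAlternating π) (j : Fin m) : π (tfun π j) ≠ tfun π j := by
  unfold tfun
  split
  · rename_i h
    intro hc
    exact at_most_one π hAlt j ⟨hc, h⟩
  · rename_i h
    exact h

lemma nonfixed_eq_tfun (hAlt : IsAlternating π) (hfpc : fixedPointCount π = m)
    {x : Fin (2 * m)} (hx : π x ≠ x) : x = tfun π (pIdx x) := by
  rcases eq_lo_or_hi x with h1 | h1
  · rcases exists_fixed π hAlt hfpc (pIdx x) with h | h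
    · rw [← h1] at h; exact absurd h hx
    · unfold tfun; rw [if_pos h]; exact h1
  · have h : ¬ π (hi (pIdx x)) = hi (pIdx x) := by rw [← h1]; exact hx
    unfold tfun; rw [if_neg h]; exact h1

lemma map_tfun (hAlt : IsAlternating π) (hfpc : fixedPointCount π = m) (j : Fin m) :
    π (tfun π j) = tfun π (pIdx (π (tfun π j))) := by
  apply nonfixed_eq_tfun π hAlt hfpc
  intro hc
  exact tfun_nonfixed π hAlt j (π.injective hc)

lemma map_tfun_inv (hAlt : IsAlternating π) (hfpc : fixedPointCount π = m) (j : Fin m) :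
    π⁻¹ (tfun π j) = tfun π (pIdx (π⁻¹ (tfun π j))) := by
  apply nonfixed_eq_tfun π hAlt hfpc
  rw [Equiv.Perm.inv_def, Equiv.apply_symm_apply]
  intro hc
  apply tfun_nonfixed π hAlt j
  conv_lhs => rw [hc]
  exact Equiv.apply_symm_apply π (tfun π j)

def psi (hAlt : IsAlternating π) (hfpc : fixedPointCount π = m) : Equiv.Perm (Fin m) where
  toFun := fun j => pIdx (π (tfun π j))
  invFun := fun j => pIdx (π⁻¹ (tfun π j))
  left_inv := by
    intro j
    show pIdx (π⁻¹ (tfun π (pIdx (π (tfun π j))))) = j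
    rw [← map_tfun π hAlt hfpc j, Equiv.Perm.inv_def, Equiv.symm_apply_apply, pIdx_tfun]
  right_inv := by
    intro j
    show pIdx (π (tfun π (pIdx (π⁻¹ (tfun π j))))) = j
    rw [← map_tfun_inv π hAlt hfpc j, Equiv.Perm.inv_def, Equiv.apply_symm_apply, pIdx_tfun]

lemma psi_apply (hAlt : IsAlternating π) (hfpc : fixedPointCount π = m) (j : Fin m) :
    psi π hAlt hfpc j = pIdx (π (tfun π j)) := rfl

lemma map_tfun' (hAlt : IsAlternating π) (hfpc : fixedPointCount π = m) (j : Fin m) :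
    π (tfun π j) = tfun π (psi π hAlt hfpc j) := by
  rw [psi_apply]; exact map_tfun π hAlt hfpc j

lemma psi_derangement (hAlt : IsAlternating π) (hfpc : fixedPointCount π = m) (j : Fin m) :
    psi π hAlt hfpc j ≠ j := by
  intro hc
  have := map_tfun' π hAlt hfpc j
  rw [hc] at this
  exact tfun_nonfixed π hAlt j this

lemma sfun_psi_eq_tfun (hAlt : IsAlternating π) (hfpc : fixedPointCount π = m) (j : Fin m) :
    sfun (psi π hAlt hfpc) j = tfun π j := by
  have hb := tfun_val_bounds π (psi π hAlt hfpc j)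
  have hmap := map_tfun' π hAlt hfpc j
  by_cases h : π (hi j) = hi j
  · have htj : tfun π j = lo j := by unfold tfun; rw [if_pos h]
    rw [htj] at hmap ⊢
    have halt := alt_pair π hAlt j
    rw [h, hmap] at halt
    have hv : (hi j).val < (tfun π (psi π hAlt hfpc j)).val := halt
    rw [hi_val] at hv
    have hlt : j < psi π hAlt hfpc j := by
      show j.val < (psi π hAlt hfpc j).val
      omega
    exact (lo_eq_sfun (psi π hAlt hfpc) j hlt (by have := j.2; omega)).symm
  · have htj : tfun π j = hi j := by unfold tfun; rw [if_neg h]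
    rw [htj] at hmap ⊢
    have hfl : π (lo j) = lo j := by
      rcases exists_fixed π hAlt hfpc j with h' | h'
      · exact h'
      · exact absurd h' h
    have halt := alt_pair π hAlt j
    rw [hfl, hmap] at halt
    have hv : (tfun π (psi π hAlt hfpc j)).val < (lo j).val := halt
    rw [lo_val] at hv
    have hlt : ¬ j < psi π hAlt hfpc j := by
      intro hc
      have : j.val < (psi π hAlt hfpc j).val := hc
      omega
    exact (hi_eq_sfun (psi π hAlt hfpc) j hlt (by have := j.2; omega)).symm

lemma phi_psi (hAlt : IsAlternating π) (hfpc : fixedPointCount π = m) :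
    phi (psi π hAlt hfpc) = π := by
  apply Equiv.ext
  intro x
  by_cases hx : π x = x
  · have hne : x ≠ sfun (psi π hAlt hfpc) (pIdx x) := by
      rw [sfun_psi_eq_tfun π hAlt hfpc]
      intro hc
      exact tfun_nonfixed π hAlt (pIdx x) (hc ▸ hx)
    rw [phi_apply, phiFun_of_ne _ hne, hx]
  · have heq : x = sfun (psi π hAlt hfpc) (pIdx x) := by
      rw [sfun_psi_eq_tfun π hAlt hfpc]
      exact nonfixed_eq_tfun π hAlt hfpc hx
    rw [phi_apply]
    conv_lhs => rw [heq]
    rw [phiFun_sfun, sfun_psi_eq_tfun π hAlt hfpc,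
      ← map_tfun' π hAlt hfpc, ← nonfixed_eq_tfun π hAlt hfpc hx]

lemma phi_injective {σ σ' : Equiv.Perm (Fin m)} (hσ : ∀ x, σ x ≠ x) (hσ' : ∀ x, σ' x ≠ x)
    (h : phi σ = phi σ') : σ = σ' := by
  have hs : ∀ j : Fin m, sfun σ j = sfun σ' j := by
    intro j
    have h1 : ¬ phi σ (sfun σ j) = sfun σ j := by
      rw [phi_fixed_iff σ hσ]
      rw [pIdx_sfun]
      simp
    rw [h, phi_fixed_iff σ' hσ', not_not, pIdx_sfun] at h1
    exact h1
  apply Equiv.ext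
  intro j
  apply sfun_injective σ
  have h1 : phi σ (sfun σ j) = sfun σ (σ j) := by rw [phi_apply, phiFun_sfun]
  have h2 : phi σ' (sfun σ' j) = sfun σ' (σ' j) := by rw [phi_apply, phiFun_sfun]
  rw [← hs j, ← h] at h2
  rw [h1] at h2
  rw [h2, ← hs (σ' j)]

theorem main (m : ℕ) :
    Nonempty ({π : Equiv.Perm (Fin (2 * m)) // IsAlternating π ∧ fixedPointCount π = m} ≃
      {σ : Equiv.Perm (Fin m) // ∀ x, σ x ≠ x}) := by
  set Φ : {σ : Equiv.Perm (Fin m) // ∀ x, σ x ≠ x} →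
      {π : Equiv.Perm (Fin (2 * m)) // IsAlternating π ∧ fixedPointCount π = m} :=
    fun σ => ⟨phi σ.1, phi_alternating σ.1 σ.2, phi_fixedPointCount σ.1 σ.2⟩ with hΦ
  have hinj : Function.Injective Φ := by
    rintro ⟨σ, hσ⟩ ⟨σ', hσ'⟩ hh
    have : phi σ = phi σ' := congrArg Subtype.val hh
    exact Subtype.ext (phi_injective hσ hσ' this)
  have hsurj : Function.Surjective Φ := by
    rintro ⟨π, hAlt, hfpc⟩
    refine ⟨⟨psi π hAlt hfpc, psi_derangement π hAlt hfpc⟩, ?_⟩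
    exact Subtype.ext (phi_psi π hAlt hfpc)
  exact ⟨(Equiv.ofBijective Φ ⟨hinj, hsurj⟩).symm⟩

end AltDer

/-- For every nonnegative integer `m`, there exists a bijection between the set of alternating
permutations of `[2m]` with exactly `m` fixed points and the set of derangements of `[m]`. -/
theorem alternating_derangement_bijection (m : ℕ) :
    Nonempty ({π : Equiv.Perm (Fin (2 * m)) // IsAlternating π ∧ fixedPointCount π = m} ≃
      {σ : Equiv.Perm (Fin m) // ∀ x, σ x ≠ x}) := AltDer.main m
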